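/- The capacity region of the K-receiver combination network with two nested messages — a common message M_{\overline{φ}} for all K receivers and a private message M_{\overline{K}} for receivers 1,...,K−1 — is exactly the set of nonnegative rate pairs (R_{\overline{K}}, R_{\overline{φ}}) satisfying R_{\overline{φ}} ≤ C_{W_K} and R_{\overline{φ}} + R_{\overline{K}} ≤ C_{W_j} for all j ∈ [1:K−1], where C_W = Σ_{S∈W} C_S. -/

import Mathlib

/-
Converse: a code with error fraction at most `ε` decodes correctly a set `G` of at least
`(1 - ε) M₁ M₂` message pairs. Every receiver `j` but the last recovers the whole pair on `G`,
so `G` injects into its `2 ^ (n C_{W_j})` possible observations; the last receiver recovers `m₂`,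
so `G` injects into `[M₁] ×` its observations. Taking logarithms and letting `ε → 0` gives the cut-set
bounds.

Achievability is a Reed–Solomon-type code over a prime field `𝔽_p`. Link `S` is given about
`n C_S / log p` evaluation points, distinct across links, so that the values of a polynomial there
fit into `n` uses of the link. The message pair is sent as `b + (∏_{x ∈ D} (X - x)) a`, where `b`
(degree `< |D|`) encodes `m₂`, `a` encodes `m₁`, and `D` is a set of points seen by the last
receiver. On `D` this polynomial equals `b`, so the last receiver interpolates `m₂`; every other
receiver sees more points than the degree, recovers the polynomial, and then `(a, b)` by division
with remainder. With `p` of order `n`, the rate lost to rounding is `O(log p / n)`.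
-/

open Finset

/-- Achievability of a rate pair over the `K`-receiver combination network with
two nested messages: the private message (rate `R1`, `M_{\bar K}`) must be decoded
by receivers `0,…,K-2` (0-indexed) and the common message (rate `R2`, `M_{\barφ}`)
by all `K` receivers.  The channel input has, for each nonempty `S ⊆ [1:K]`, a
component in `V S` observed noiselessly by exactly the receivers in `S`.
Achievability: for every `ε > 0` there exists a block code of some length `n`
with per-symbol rates at least `R1 - ε`, `R2 - ε` and average (uniform-message)
error probability at most `ε`. -/
def NestedOneCommonAchievable (K : ℕ)
    (V : {S : Finset (Fin K) // S.Nonempty} → Type)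
    [∀ S, Fintype (V S)] (R1 R2 : ℝ) : Prop :=
  ∀ ε : ℝ, 0 < ε → ∃ (n M1 M2 : ℕ), 0 < n ∧ 0 < M1 ∧ 0 < M2 ∧
    R1 - ε ≤ Real.logb 2 M1 / n ∧ R2 - ε ≤ Real.logb 2 M2 / n ∧
    ∃ (enc : Fin M1 → Fin M2 → Fin n → ∀ S : {S : Finset (Fin K) // S.Nonempty}, V S)
      (dec : ∀ i : Fin K,
        (Fin n → ∀ T : {S : {S : Finset (Fin K) // S.Nonempty} // i ∈ S.1}, V T.1) →
          Fin M1 × Fin M2),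
      ((univ.filter (fun mm : Fin M1 × Fin M2 =>
          ¬ ((∀ i : Fin K, (i : ℕ) < K - 1 →
                (dec i (fun t T => enc mm.1 mm.2 t T.1)).1 = mm.1) ∧
             (∀ i : Fin K,
                (dec i (fun t T => enc mm.1 mm.2 t T.1)).2 = mm.2)))).card : ℝ) ≤
        ε * (M1 * M2)

open Polynomial

namespace CombinationNetwork

abbrev Link (K : ℕ) := {S : Finset (Fin K) // S.Nonempty}

variable {K : ℕ}

def observe {V : Link K → Type} (i : Fin K) {n : ℕ} (x : Fin n → ∀ S, V S) :
    Fin n → ∀ T : {S : Link K // i ∈ S.1}, V T.1 :=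
  fun s T => x s T.1

def IsZeroErrorCode {V : Link K → Type} {n M1 M2 : ℕ}
    (enc : Fin M1 → Fin M2 → Fin n → ∀ S, V S) : Prop :=
  ∀ i m1 m2 m1' m2', observe i (enc m1 m2) = observe i (enc m1' m2') →
    m2 = m2' ∧ ((i : ℕ) < K - 1 → m1 = m1')

noncomputable def receiverCapacity (V : Link K → Type) [∀ S, Fintype (V S)] (i : Fin K) : ℝ :=
  ∑ S ∈ univ.filter (fun S : Link K => i ∈ S.1), Real.logb 2 (Fintype.card (V S))


section Converse

theorem card_le_card_of_leftInverseOn {α γ : Type*} [Fintype γ] {G : Finset α} {f : α → γ}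
    {g : γ → α} (h : ∀ a ∈ G, g (f a) = a) : #G ≤ Fintype.card γ := by
  rw [← card_univ]
  exact card_le_card_of_injOn f (fun _ _ => mem_coe.2 (mem_univ _)) fun a ha b hb hab => by
    rw [← h a ha, ← h b hb, hab]

theorem card_le_mul_card_of_snd_eq {α β γ : Type*} [Fintype α] [Fintype γ] {G : Finset (α × β)}
    {f : α × β → γ} {g : γ → β} (h : ∀ m ∈ G, g (f m) = m.2) :
    #G ≤ Fintype.card α * Fintype.card γ := by
  rw [← Fintype.card_prod]
  exact card_le_card_of_leftInverseOn (f := fun m => (m.1, f m)) (g := fun x => (x.1, g x.2))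
    fun m hm => by rw [h m hm]

theorem le_logb_div_sub_logb_of_card_le {x ε : ℝ} {n M N : ℕ} (hn : 0 < n) (hM : 0 < M)
    (hε0 : 0 ≤ ε) (hε1 : ε < 1) (hx : x * n ≤ Real.logb 2 M) (h : (1 - ε) * M ≤ N) :
    x ≤ Real.logb 2 N / n - Real.logb 2 (1 - ε) := by
  have hMR : (0 : ℝ) < M := by exact_mod_cast hM
  have hlog : Real.logb 2 (1 - ε) + Real.logb 2 M ≤ Real.logb 2 N := by
    rw [← Real.logb_mul (by linarith) hMR.ne']
    exact Real.logb_le_logb_of_le one_lt_two (mul_pos (by linarith) hMR) h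
  have hneg : Real.logb 2 (1 - ε) ≤ 0 := Real.logb_nonpos one_lt_two (by linarith) (by linarith)
  have hn1 : (1 : ℝ) ≤ n := by exact_mod_cast hn
  have := mul_le_mul_of_nonpos_left hn1 hneg
  rw [le_sub_iff_add_le, le_div_iff₀ (by positivity)]
  linarith

open Filter Topology in
theorem le_of_forall_le_add_sub_logb {a b : ℝ}
    (h : ∀ ε, 0 < ε → ε < 1 → a ≤ b + 2 * ε - Real.logb 2 (1 - ε)) : a ≤ b := by
  have hcont : ContinuousAt (fun ε : ℝ => b + 2 * ε - Real.logb 2 (1 - ε)) 0 :=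
    by fun_prop (disch := norm_num)
  have hlim : Tendsto (fun ε : ℝ => b + 2 * ε - Real.logb 2 (1 - ε)) (𝓝[>] 0) (𝓝 b) := by
    simpa using hcont.tendsto.mono_left nhdsWithin_le_nhds
  exact ge_of_tendsto hlim
    (eventually_of_mem (Ioo_mem_nhdsGT one_pos) fun ε hε => h ε hε.1 hε.2)

variable {V : Link K → Type} [∀ S, Fintype (V S)] [∀ S, Nonempty (V S)]

theorem logb_card_observation (i : Fin K) (n : ℕ) :
    Real.logb 2 (Fintype.card (Fin n → ∀ T : {S : Link K // i ∈ S.1}, V T.1)) =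
      n * receiverCapacity V i := by
  rw [Fintype.card_fun, Fintype.card_fin, Fintype.card_pi, Nat.cast_pow, Real.logb_pow,
    Nat.cast_prod, Real.logb_prod _ _ fun T _ => by exact_mod_cast Fintype.card_ne_zero,
    receiverCapacity, sum_subtype _ (mem_filter_univ (p := fun S : Link K => i ∈ S.1))]

theorem sub_le_receiverCapacity_sub_logb_of_achievable {R1 R2 : ℝ}
    (hach : NestedOneCommonAchievable K V R1 R2) {ε : ℝ} (hε : 0 < ε) (hε1 : ε < 1) :
    (∀ i, R2 - ε ≤ receiverCapacity V i - Real.logb 2 (1 - ε)) ∧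
      ∀ j : Fin K, (j : ℕ) < K - 1 →
        R2 + R1 - 2 * ε ≤ receiverCapacity V j - Real.logb 2 (1 - ε) := by
  classical
  obtain ⟨n, M1, M2, hn, hM1, hM2, hr1, hr2, enc, dec, herr⟩ := hach ε hε
  let good (m : Fin M1 × Fin M2) : Prop :=
    (∀ i : Fin K, (i : ℕ) < K - 1 → (dec i (observe i (enc m.1 m.2))).1 = m.1) ∧
      ∀ i, (dec i (observe i (enc m.1 m.2))).2 = m.2
  set G := univ.filter good
  change ((univ.filter fun m => ¬ good m).card : ℝ) ≤ _ at herr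
  have hG : (1 - ε) * (M1 * M2) ≤ #G := by
    have hsplit := card_filter_add_card_filter_not (s := univ) good
    rw [card_univ, Fintype.card_prod, Fintype.card_fin, Fintype.card_fin] at hsplit
    have : (#G : ℝ) + #(univ.filter fun m => ¬ good m) = M1 * M2 := by exact_mod_cast hsplit
    linarith
  have hnR : (0 : ℝ) < n := by exact_mod_cast hn
  have hr1' := (le_div_iff₀ hnR).1 hr1
  have hr2' := (le_div_iff₀ hnR).1 hr2
  have hobs (i : Fin K) {x : ℝ} {M : ℕ} (hM : 0 < M) (hx : x * n ≤ Real.logb 2 M)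
      (hMN : (1 - ε) * M ≤ Fintype.card (Fin n → ∀ T : {S : Link K // i ∈ S.1}, V T.1)) :
      x ≤ receiverCapacity V i - Real.logb 2 (1 - ε) := by
    have := le_logb_div_sub_logb_of_card_le hn hM hε.le hε1 hx hMN
    rwa [logb_card_observation, mul_div_cancel_left₀ _ hnR.ne'] at this
  constructor
  · intro i
    have hGi : #G ≤ M1 * Fintype.card (Fin n → ∀ T : {S : Link K // i ∈ S.1}, V T.1) := by
      simpa using card_le_mul_card_of_snd_eq (G := G) (f := fun m => observe i (enc m.1 m.2))
        (g := fun y => (dec i y).2) fun m hm => (mem_filter.1 hm).2.2 i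
    refine hobs i hM2 hr2' (le_of_mul_le_mul_left (a := (M1 : ℝ)) ?_ (by exact_mod_cast hM1))
    calc (M1 : ℝ) * ((1 - ε) * M2) = (1 - ε) * (M1 * M2) := by ring
      _ ≤ _ := hG.trans (by exact_mod_cast hGi)
  · intro j hj
    have hGj : #G ≤ Fintype.card (Fin n → ∀ T : {S : Link K // j ∈ S.1}, V T.1) :=
      card_le_card_of_leftInverseOn (f := fun m => observe j (enc m.1 m.2)) (g := dec j)
        fun m hm => Prod.ext ((mem_filter.1 hm).2.1 j hj) ((mem_filter.1 hm).2.2 j)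
    refine hobs j (M := M1 * M2) (by positivity) ?_
      (by push_cast; exact hG.trans (by exact_mod_cast hGj))
    rw [Nat.cast_mul, Real.logb_mul (by positivity) (by positivity)]
    linarith

theorem le_receiverCapacity_of_achievable {R1 R2 : ℝ}
    (hach : NestedOneCommonAchievable K V R1 R2) :
    (∀ i, R2 ≤ receiverCapacity V i) ∧
      ∀ j : Fin K, (j : ℕ) < K - 1 → R2 + R1 ≤ receiverCapacity V j := by
  refine ⟨fun i => le_of_forall_le_add_sub_logb fun ε hε hε1 => ?_,
    fun j hj => le_of_forall_le_add_sub_logb fun ε hε hε1 => ?_⟩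
  · linarith [(sub_le_receiverCapacity_sub_logb_of_achievable hach hε hε1).1 i]
  · linarith [(sub_le_receiverCapacity_sub_logb_of_achievable hach hε hε1).2 j hj]

end Converse

section Achievability

theorem pow_le_pow_of_mul_logb_le {a b t n : ℕ} (ha : 0 < a) (hb : 0 < b)
    (h : t * Real.logb 2 a ≤ n * Real.logb 2 b) : a ^ t ≤ b ^ n := by
  rw [← Real.logb_pow, ← Real.logb_pow] at h
  exact_mod_cast (Real.logb_le_logb one_lt_two (by positivity) (by positivity)).1 h

theorem le_sum_floor_add_card {ι : Type*} (s : Finset ι) (y : ι → ℝ) {m : ℕ}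
    (hm : (m : ℝ) ≤ ∑ i ∈ s, y i) : m ≤ ∑ i ∈ s, ⌊y i⌋₊ + #s := by
  have hy : ∑ i ∈ s, y i ≤ ∑ i ∈ s, ((⌊y i⌋₊ : ℝ) + 1) :=
    sum_le_sum fun i _ => (Nat.lt_floor_add_one _).le
  rw [sum_add_distrib, sum_const, nsmul_one] at hy
  exact_mod_cast hm.trans hy

theorem sum_floor_div_le {ι : Type*} [Fintype ι] {y : ι → ℝ} (hy : ∀ i, 0 ≤ y i) {ℓ : ℝ}
    {N : ℕ} (hℓ : 0 < ℓ) (h : ∑ i, y i ≤ N * ℓ) : ∑ i, ⌊y i / ℓ⌋₊ ≤ N := by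
  have : (∑ i, ⌊y i / ℓ⌋₊ : ℝ) ≤ N := by
    calc (∑ i, ⌊y i / ℓ⌋₊ : ℝ) ≤ ∑ i, y i / ℓ :=
          sum_le_sum fun i _ => Nat.floor_le (div_nonneg (hy i) hℓ.le)
      _ = (∑ i, y i) / ℓ := (sum_div _ _ _).symm
      _ ≤ N := (div_le_iff₀ hℓ).2 h
  exact_mod_cast this

theorem sub_le_floor_sub_mul_div (R : ℝ) {ε ℓ : ℝ} {n L : ℕ} (hn : 0 < n) (hℓ : 0 < ℓ)
    (hε : (L + 1) * ℓ / n ≤ ε) : R - ε ≤ ((⌊n * R / ℓ⌋₊ - L : ℕ) : ℝ) * ℓ / n := by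
  have hfloor := Nat.sub_one_lt_floor (n * R / ℓ)
  have htsub : (⌊n * R / ℓ⌋₊ : ℝ) ≤ ((⌊n * R / ℓ⌋₊ - L : ℕ) : ℝ) + L := by
    exact_mod_cast le_tsub_add
  have hnR : (0 : ℝ) < n := by exact_mod_cast hn
  calc R - ε ≤ R - (L + 1) * ℓ / n := by linarith
    _ = (n * R / ℓ - 1 - L) * ℓ / n := by field_simp; ring
    _ ≤ ((⌊n * R / ℓ⌋₊ - L : ℕ) : ℝ) * ℓ / n := by gcongr; linarith

theorem exists_blockLength_prime {A C ε : ℝ} (hA : 0 ≤ A) (hC : 0 ≤ C) (hε : 0 < ε) :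
    ∃ n p : ℕ, 0 < n ∧ p.Prime ∧ n * C ≤ p * Real.logb 2 p ∧ A * Real.logb 2 p / n ≤ ε := by
  obtain ⟨p, hpC, hp⟩ := Nat.exists_infinite_primes ⌈(A / ε + 2) * C⌉₊
  have hℓ : 1 ≤ Real.logb 2 p := by
    rw [← Real.logb_self_eq_one one_lt_two]
    exact Real.logb_le_logb_of_le one_lt_two two_pos (by exact_mod_cast hp.two_le)
  set ℓ := Real.logb 2 p
  set n := ⌈A * ℓ / ε⌉₊ + 1
  have hnpos : (0 : ℝ) < n := by positivity
  have hn_ge : A * ℓ / ε ≤ n := (Nat.le_ceil _).trans (by simp [n])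
  have hn_le : (n : ℝ) ≤ A * ℓ / ε + 2 := by
    have := Nat.ceil_lt_add_one (show 0 ≤ A * ℓ / ε by positivity)
    simp only [n, Nat.cast_add, Nat.cast_one]
    linarith
  have hpC' : (A / ε + 2) * C ≤ p := Nat.ceil_le.1 hpC
  refine ⟨n, p, by positivity, hp, ?_, ?_⟩
  · calc n * C ≤ (A * ℓ / ε + 2) * C := by gcongr
      _ ≤ (A / ε + 2) * C * ℓ := by
        rw [mul_div_right_comm]; nlinarith [mul_nonneg (div_nonneg hA hε.le) hC]
      _ ≤ p * ℓ := by gcongr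
  · show A * ℓ / n ≤ ε
    rw [div_le_iff₀ hnpos]
    rw [div_le_iff₀ hε] at hn_ge
    linarith

section NestedPolynomialCode

variable {F : Type*} [Field F] {D : Finset F} {a a' b b' : F[X]}

theorem eval_add_nodal_mul_of_mem {x : F} (hx : x ∈ D) :
    (b + Lagrange.nodal D id * a).eval x = b.eval x := by
  rw [eval_add, eval_mul,
    show (Lagrange.nodal D id).eval x = 0 from Lagrange.eval_nodal_at_node (v := id) hx,
    zero_mul, add_zero]

theorem degree_add_nodal_mul_lt {k : ℕ} (hb : b.degree < #D) (ha : a.degree < k) :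
    (b + Lagrange.nodal D id * a).degree < ↑(#D + k) := by
  refine (degree_add_le _ _).trans_lt
    (max_lt (hb.trans_le (by exact_mod_cast Nat.le_add_right _ _)) ?_)
  rw [degree_mul, Lagrange.degree_nodal, Nat.cast_add]
  exact WithBot.add_lt_add_left (WithBot.coe_ne_bot) ha

theorem eq_and_eq_of_add_nodal_mul_eq (hb : b.degree < #D) (hb' : b'.degree < #D)
    (h : b + Lagrange.nodal D id * a = b' + Lagrange.nodal D id * a') : a = a' ∧ b = b' := by
  have hD : (Lagrange.nodal D id).degree = #D := Lagrange.degree_nodal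
  obtain ⟨hq, hr⟩ := div_modByMonic_unique a b Lagrange.nodal_monic ⟨h, hD ▸ hb⟩
  obtain ⟨hq', hr'⟩ := div_modByMonic_unique a' b' Lagrange.nodal_monic ⟨rfl, hD ▸ hb'⟩
  exact ⟨hq.symm.trans hq', hr.symm.trans hr'⟩

theorem exists_injective_degree_lt [Fintype F] (k : ℕ) :
    ∃ f : Fin (Fintype.card F ^ k) → F[X], Function.Injective f ∧ ∀ m, (f m).degree < k := by
  let e : Fin (Fintype.card F ^ k) ≃ (Fin k → F) :=
    Fintype.equivOfCardEq (by simp)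
  let g := e.trans (degreeLTEquiv F k).symm.toEquiv
  exact ⟨fun m => g m, Subtype.val_injective.comp g.injective, fun m => mem_degreeLT.mp (g m).2⟩

end NestedPolynomialCode

section EvaluationCode

variable {V : Link K → Type} {F : Type*} {t : Link K → ℕ} (ν : (Σ S : Link K, Fin (t S)) ↪ F)

def receiverPoints (i : Fin K) : Finset F :=
  ((univ.filter fun S : Link K => i ∈ S.1).sigma fun _ => univ).map ν

theorem card_receiverPoints (i : Fin K) :
    #(receiverPoints ν i) = ∑ S ∈ univ.filter (fun S : Link K => i ∈ S.1), t S := by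
  simp [receiverPoints, card_sigma]

noncomputable def evalCodeword [Semiring F] {n : ℕ} (φ : ∀ S, (Fin (t S) → F) → Fin n → V S)
    (f : F[X]) : Fin n → ∀ S, V S :=
  fun s S => φ S (fun r => f.eval (ν ⟨S, r⟩)) s

theorem eval_eq_of_observe_evalCodeword_eq [Semiring F] {n : ℕ}
    {φ : ∀ S, (Fin (t S) → F) → Fin n → V S} (hφ : ∀ S, Function.Injective (φ S)) {i : Fin K}
    {f g : F[X]}
    (h : observe i (evalCodeword ν φ f) = observe i (evalCodeword ν φ g)) :
    ∀ x ∈ receiverPoints ν i, f.eval x = g.eval x := by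
  intro x hx
  obtain ⟨⟨S, r⟩, hσ, rfl⟩ := mem_map.1 hx
  have hS : i ∈ S.1 := (mem_filter.1 (mem_sigma.1 hσ).1).2
  exact congrFun (hφ S (funext fun s => congrFun (congrFun h s) ⟨S, hS⟩)) r

end EvaluationCode

variable (V : Link K → Type) [∀ S, Fintype (V S)]

theorem exists_isZeroErrorCode {F : Type*} [Field F] [Fintype F] (n : ℕ) (t : Link K → ℕ)
    (k1 k2 : ℕ) (κ : Fin K) (hκ : (κ : ℕ) = K - 1)
    (hlink : ∀ S, Fintype.card F ^ t S ≤ Fintype.card (V S) ^ n)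
    (hpts : ∑ S, t S ≤ Fintype.card F)
    (hcommon : k2 ≤ ∑ S ∈ univ.filter (fun S : Link K => κ ∈ S.1), t S)
    (hprivate : ∀ j : Fin K, (j : ℕ) < K - 1 →
      k1 + k2 ≤ ∑ S ∈ univ.filter (fun S : Link K => j ∈ S.1), t S) :
    ∃ enc : Fin (Fintype.card F ^ k1) → Fin (Fintype.card F ^ k2) → Fin n → ∀ S, V S,
      IsZeroErrorCode enc := by
  obtain ⟨ν⟩ : Nonempty ((Σ S : Link K, Fin (t S)) ↪ F) :=
    Function.Embedding.nonempty_of_card_le (by simpa using hpts)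
  obtain ⟨φ⟩ : Nonempty (∀ S, (Fin (t S) → F) ↪ (Fin n → V S)) :=
    ⟨fun S => (Function.Embedding.nonempty_of_card_le (by simpa using hlink S)).some⟩
  obtain ⟨D, hDsub, hDcard⟩ := exists_subset_card_eq (s := receiverPoints ν κ) (n := k2)
    (by rwa [card_receiverPoints])
  obtain ⟨A, hAinj, hAdeg⟩ := exists_injective_degree_lt (F := F) k1
  obtain ⟨B, hBinj, hBdeg⟩ := exists_injective_degree_lt (F := F) k2
  replace hBdeg : ∀ m, (B m).degree < #D := fun m => hDcard ▸ hBdeg m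
  refine ⟨fun m1 m2 => evalCodeword ν (fun S => φ S) (B m2 + Lagrange.nodal D id * A m1), ?_⟩
  intro i m1 m2 m1' m2' h
  have hev := eval_eq_of_observe_evalCodeword_eq ν (fun S => (φ S).injective) h
  by_cases hi : (i : ℕ) < K - 1
  · have hcard : #D + k1 ≤ #(receiverPoints ν i) := by
      rw [hDcard, card_receiverPoints]; linarith [hprivate i hi]
    have hdeg : ∀ m1 m2, (B m2 + Lagrange.nodal D id * A m1).degree < #(receiverPoints ν i) :=
      fun m1 m2 =>
        (degree_add_nodal_mul_lt (hBdeg m2) (hAdeg m1)).trans_le (by exact_mod_cast hcard)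
    obtain ⟨ha, hb⟩ := eq_and_eq_of_add_nodal_mul_eq (hBdeg m2) (hBdeg m2')
      (eq_of_degrees_lt_of_eval_finset_eq _ (hdeg m1 m2) (hdeg m1' m2') hev)
    exact ⟨hBinj hb, fun _ => hAinj ha⟩
  · obtain rfl : i = κ := Fin.ext (by omega)
    refine ⟨hBinj (eq_of_degrees_lt_of_eval_finset_eq D (hBdeg m2) (hBdeg m2') fun x hx => ?_),
      fun h' => absurd h' hi⟩
    simpa only [eval_add_nodal_mul_of_mem hx] using hev x (hDsub hx)

theorem achievable_of_isZeroErrorCode {R1 R2 : ℝ}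
    (h : ∀ ε : ℝ, 0 < ε → ∃ n M1 M2 : ℕ, 0 < n ∧ 0 < M1 ∧ 0 < M2 ∧
      R1 - ε ≤ Real.logb 2 M1 / n ∧ R2 - ε ≤ Real.logb 2 M2 / n ∧
      ∃ enc : Fin M1 → Fin M2 → Fin n → ∀ S, V S, IsZeroErrorCode enc) :
    NestedOneCommonAchievable K V R1 R2 := by
  intro ε hε
  obtain ⟨n, M1, M2, hn, hM1, hM2, hr1, hr2, enc, henc⟩ := h ε hε
  have : Nonempty (Fin M1 × Fin M2) := ⟨(⟨0, hM1⟩, ⟨0, hM2⟩)⟩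
  let dec (i : Fin K) := Function.invFun fun m : Fin M1 × Fin M2 => observe i (enc m.1 m.2)
  have hdec (i : Fin K) (m : Fin M1 × Fin M2) :=
    henc i _ _ _ _ (Function.invFun_eq (f := fun m : Fin M1 × Fin M2 => observe i (enc m.1 m.2))
      ⟨m, rfl⟩)
  refine ⟨n, M1, M2, hn, hM1, hM2, hr1, hr2, enc, dec, ?_⟩
  rw [filter_false_of_mem fun m _ =>
      not_not.2 ⟨fun i hi => (hdec i m).2 hi, fun i => (hdec i m).1⟩,
    card_empty, Nat.cast_zero]
  positivity

variable [∀ S, Nonempty (V S)]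

theorem achievable_of_le_receiverCapacity {R1 R2 : ℝ} (h1 : 0 ≤ R1) (h2 : 0 ≤ R2)
    (κ : Fin K) (hκ : (κ : ℕ) = K - 1) (hR2 : R2 ≤ receiverCapacity V κ)
    (hR12 : ∀ j : Fin K, (j : ℕ) < K - 1 → R2 + R1 ≤ receiverCapacity V j) :
    NestedOneCommonAchievable K V R1 R2 := by
  refine achievable_of_isZeroErrorCode V fun ε hε => ?_
  set c : Link K → ℝ := fun S => Real.logb 2 (Fintype.card (V S))
  have hc : ∀ S, 0 ≤ c S := fun S =>
    Real.logb_nonneg one_lt_two (by exact_mod_cast Fintype.card_pos)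
  set L := Fintype.card (Link K)
  obtain ⟨n, p, hn, hp, hpts, hrate⟩ := exists_blockLength_prime (A := L + 1) (C := ∑ S, c S)
    (by positivity) (sum_nonneg fun S _ => hc S) hε
  have : Fact p.Prime := ⟨hp⟩
  set ℓ := Real.logb 2 p
  have hℓ : 0 < ℓ := Real.logb_pos one_lt_two (by exact_mod_cast hp.one_lt)
  have hnR : (0 : ℝ) < n := by exact_mod_cast hn
  -- Link `S` carries `t S` field elements per block and a message of rate `R` is `k R` field
  -- elements; the `- L` absorbs the rounding loss of the `t S`, at most one per link.
  set t : Link K → ℕ := fun S => ⌊n * c S / ℓ⌋₊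
  set k : ℝ → ℕ := fun R => ⌊n * R / ℓ⌋₊ - L
  have ht (S : Link K) : (t S : ℝ) ≤ n * c S / ℓ := Nat.floor_le (by have := hc S; positivity)
  have hfit (i : Fin K) (m : ℕ) (hm : (m : ℝ) ≤ n * receiverCapacity V i / ℓ) :
      m ≤ ∑ S ∈ univ.filter (fun S : Link K => i ∈ S.1), t S + L := by
    refine (le_sum_floor_add_card _ (fun S => n * c S / ℓ) ?_).trans
      (Nat.add_le_add_left (card_le_univ _) _)
    rwa [receiverCapacity, mul_sum, sum_div] at hm
  have hk (R : ℝ) (hR : 0 ≤ R) : (⌊n * R / ℓ⌋₊ : ℝ) ≤ n * R / ℓ := Nat.floor_le (by positivity)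
  obtain ⟨enc, henc⟩ := exists_isZeroErrorCode V (F := ZMod p) n t (k R1) (k R2) κ hκ
    (fun S => by
      rw [ZMod.card]
      refine pow_le_pow_of_mul_logb_le hp.pos Fintype.card_pos ?_
      rw [← le_div_iff₀ hℓ]
      exact ht S)
    (by
      rw [ZMod.card]
      exact sum_floor_div_le (fun S => mul_nonneg hnR.le (hc S)) hℓ (by rwa [← mul_sum]))
    (by
      have := hfit κ _ ((hk R2 h2).trans (by gcongr))
      simp only [k]
      omega)
    (fun j hj => by
      have := hfit j (⌊n * R1 / ℓ⌋₊ + ⌊n * R2 / ℓ⌋₊) (by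
        push_cast
        calc _ ≤ n * R1 / ℓ + n * R2 / ℓ := add_le_add (hk R1 h1) (hk R2 h2)
          _ = n * (R2 + R1) / ℓ := by ring
          _ ≤ _ := by gcongr; exact hR12 j hj)
      simp only [k]
      omega)
  refine ⟨n, _, _, hn, by positivity, by positivity, ?_, ?_, enc, henc⟩ <;>
    rw [ZMod.card, Nat.cast_pow, Real.logb_pow] <;>
    exact sub_le_floor_sub_mul_div _ hn hℓ hrate

end Achievability

end CombinationNetwork

/-- The capacity region of the `K`-receiver combination network
with two nested messages (common message `M_{\barφ}` of rate `R2` for all receivers,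
private message `M_{\bar K}` of rate `R1` for receivers `1,…,K-1`) is exactly the
set of nonnegative rate pairs with `R2 ≤ C_{W_K}` and `R2 + R1 ≤ C_{W_j}` for all
`j ∈ [1:K-1]`, where `C_W = ∑_{S ∈ W} log₂ |V S|` and receiver `K` is the
0-indexed `⟨K-1,_⟩`. -/
theorem stmt_13 (K : ℕ) (hK : 2 ≤ K)
    (V : {S : Finset (Fin K) // S.Nonempty} → Type)
    [∀ S, Fintype (V S)] [∀ S, Nonempty (V S)]
    (R1 R2 : ℝ) (h1 : 0 ≤ R1) (h2 : 0 ≤ R2) :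
    NestedOneCommonAchievable K V R1 R2 ↔
      (R2 ≤ ∑ S ∈ univ.filter (fun S : {S : Finset (Fin K) // S.Nonempty} =>
              (⟨K - 1, by omega⟩ : Fin K) ∈ S.1),
            Real.logb 2 (Fintype.card (V S)) ∧
       ∀ j : Fin K, (j : ℕ) < K - 1 →
         R2 + R1 ≤ ∑ S ∈ univ.filter (fun S : {S : Finset (Fin K) // S.Nonempty} =>
              j ∈ S.1),
            Real.logb 2 (Fintype.card (V S))) := by
  constructor
  · intro hach
    obtain ⟨hcommon, hprivate⟩ := CombinationNetwork.le_receiverCapacity_of_achievable hach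
    exact ⟨hcommon _, hprivate⟩
  · rintro ⟨hR2, hR12⟩
    exact CombinationNetwork.achievable_of_le_receiverCapacity V h1 h2 _ rfl hR2 hR12
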